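/- arXiv:math/0310056 — 2 statements merged into one kernel-verified Lean document; each statement's English description precedes it below -/
import Mathlib

section
/- For all integers n ≥ m ≥ 1, one has the closed formula f(m,n) = Σ_{k=1}^{m−1} (−1)^{m+k+1} · binom(m, k+1) · k^n; equivalently, χ(m,n) = 1 + (−1)^{n−m} · Σ_{k=1}^{m−1} (−1)^{m+k+1} · binom(m, k+1) · k^n. -/
/-! A family `η` of pairwise disjoint subsets of `[n]` indexed by `[m]` is the same as a map
`c : [n] → Option [m]` sending `x` to the `i` with `x ∈ η i` (and to `none` if there is none);
`Σ |η i|` counts the points not sent to `none`. Hence `(-1)^m χ(m,n)` is the sum of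
`∏ₓ w (c x)`, with `w none = 1` and `w (some i) = -1`, over the maps `c` hitting every `some i`.
Inclusion–exclusion over the set `T` of values allowed besides `none` turns this into
`Σ_T (-1)^(m - |T|) (1 - |T|)^n`. Grouping by `|T| = k + 1`, the term `|T| = 0` is the `1` that
is subtracted in `f(m,n)`, the term `|T| = 1` vanishes, and the others give the formula. -/

open Finset in
open Classical in
/-- The (non-reduced) Euler characteristic of `Hom(K_m, K_n)`:
`χ(m,n) = Σ_η (−1)^{(Σ_i |η(i)|) − m}`, where `η` ranges over all functions from
`{1,…,m}` to nonempty subsets of `{1,…,n}` with pairwise disjoint values. -/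
noncomputable def homEulerChar (m n : ℕ) : ℤ :=
  ∑ η : Fin m → Finset (Fin n),
    if (∀ i, (η i).Nonempty) ∧ (∀ i j : Fin m, i ≠ j → Disjoint (η i) (η j))
    then (-1 : ℤ) ^ ((∑ i, (η i).card) - m) else 0

/-- `f(m,n) = (−1)^{n−m}·(χ(m,n) − 1)`, the number of spheres in the wedge
decomposition of `Hom(K_m, K_n)`. -/
noncomputable def sphereCount (m n : ℕ) : ℤ :=
  (-1 : ℤ) ^ (n - m) * (homEulerChar m n - 1)

open Finset

section Fibers

variable {α ι : Type*} [Fintype α] [DecidableEq ι]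

def fibers (c : α → Option ι) (i : ι) : Finset α := {x | c x = some i}

@[simp] lemma mem_fibers {c : α → Option ι} {i : ι} {x : α} : x ∈ fibers c i ↔ c x = some i := by
  simp [fibers]

lemma fibers_nonempty_iff {c : α → Option ι} {i : ι} :
    (fibers c i).Nonempty ↔ ∃ x, c x = some i := by
  simp [Finset.Nonempty]

lemma fibers_pairwise_disjoint (c : α → Option ι) :
    ∀ i j, i ≠ j → Disjoint (fibers c i) (fibers c j) := fun _ _ hij =>
  disjoint_left.2 fun _ hi hj => hij <| Option.some_injective _ <|
    (mem_fibers.1 hi).symm.trans (mem_fibers.1 hj)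

lemma fibers_injective : Function.Injective (fibers : (α → Option ι) → ι → Finset α) := by
  intro c d h
  funext x
  exact Option.ext fun i => by rw [← mem_fibers, ← mem_fibers, h]

lemma exists_fibers_eq {η : ι → Finset α} (hη : ∀ i j, i ≠ j → Disjoint (η i) (η j)) :
    ∃ c : α → Option ι, fibers c = η := by
  classical
  refine ⟨fun x => if h : ∃ i, x ∈ η i then some h.choose else none, ?_⟩
  funext i
  ext x
  rw [mem_fibers]
  split_ifs with h
  · refine ⟨fun hi => Option.some_injective _ hi ▸ h.choose_spec, fun hx => ?_⟩
    by_contra hne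
    exact disjoint_left.1 (hη _ _ fun he => hne (congrArg some he)) h.choose_spec hx
  · simpa using fun hx => h ⟨i, hx⟩

lemma sum_ite_pairwise_disjoint_eq_sum_fibers [Fintype ι] [DecidableEq α] {M : Type*}
    [AddCommMonoid M] [DecidablePred fun η : ι → Finset α => ∀ i j, i ≠ j → Disjoint (η i) (η j)]
    (F : (ι → Finset α) → M) :
    ∑ η : ι → Finset α, (if ∀ i j, i ≠ j → Disjoint (η i) (η j) then F η else 0) =
      ∑ c : α → Option ι, F (fibers c) := by
  rw [← sum_filter]
  have hrange : ({η | ∀ i j, i ≠ j → Disjoint (η i) (η j)} : Finset (ι → Finset α)) =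
      univ.image fibers := by
    ext η
    simp only [mem_filter, mem_univ, true_and, mem_image]
    exact ⟨exists_fibers_eq, fun ⟨c, hc⟩ => hc ▸ fibers_pairwise_disjoint c⟩
  rw [hrange, sum_image fun c _ d _ h => fibers_injective h]

lemma prod_elim_neg_one_eq_neg_one_pow_sum_card_fibers [Fintype ι] [DecidableEq α]
    (c : α → Option ι) :
    ∏ x, (c x).elim 1 (fun _ => -1) = (-1 : ℤ) ^ ∑ i, #(fibers c i) := by
  rw [← prod_fiberwise' univ c (fun o => o.elim 1 fun _ => -1), Fintype.prod_option,
    ← prod_pow_eq_pow_sum]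
  simp [fibers]

lemma sum_prod_filter_forall_exists_eq_some [DecidableEq α] [Fintype ι] {R : Type*} [CommRing R]
    [DecidablePred fun c : α → Option ι => ∀ i, ∃ x, c x = some i] (g : Option ι → R) :
    ∑ c : α → Option ι with ∀ i, ∃ x, c x = some i, ∏ x, g (c x) =
      ∑ T : Finset ι, (-1) ^ #Tᶜ * (g none + ∑ i ∈ T, g (some i)) ^ Fintype.card α := by
  have hsurj : (univ.inf fun i => ({c | ∀ x, c x ≠ some i} : Finset (α → Option ι))ᶜ) =
      ({c | ∀ i, ∃ x, c x = some i} : Finset (α → Option ι)) := by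
    ext c
    simp [mem_inf]
  have havoid (t : Finset ι) : t.inf (fun i => ({c | ∀ x, c x ≠ some i} : Finset (α → Option ι))) =
      Fintype.piFinset fun _ => insertNone tᶜ := by
    ext c
    simp only [mem_inf, mem_filter, mem_univ, true_and, Fintype.mem_piFinset, mem_insertNone,
      Option.mem_def, mem_compl]
    exact ⟨fun h x i hx hi => h i hi x hx, fun h i hi x hx => h x i hx hi⟩
  rw [← hsurj, inclusion_exclusion_sum_inf_compl, powerset_univ,
    ← Equiv.sum_comp (compl_involutive.toPerm _)]
  refine sum_congr rfl fun t _ => ?_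
  rw [havoid, ← prod_univ_sum, prod_const, sum_insertNone, card_univ]
  simp

end Fibers

lemma neg_one_pow_sub {a b : ℕ} (h : b ≤ a) : (-1 : ℤ) ^ (a - b) = (-1) ^ a * (-1) ^ b := by
  rw [← pow_sub_mul_pow (-1 : ℤ) h, mul_assoc, ← mul_pow, neg_one_mul, neg_neg, one_pow, mul_one]

lemma homEulerChar_eq_sum_prod (m n : ℕ) :
    homEulerChar m n = (-1) ^ m * ∑ c : Fin n → Option (Fin m) with ∀ i, ∃ x, c x = some i,
      ∏ x, (c x).elim 1 fun _ => -1 := by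
  calc homEulerChar m n
      = ∑ η : Fin m → Finset (Fin n), if ∀ i j, i ≠ j → Disjoint (η i) (η j) then
          (if ∀ i, (η i).Nonempty then (-1 : ℤ) ^ ((∑ i, #(η i)) - m) else 0) else 0 :=
        sum_congr rfl fun η _ => (if_congr and_comm rfl rfl).trans (ite_and _ _ _ _)
    _ = ∑ c : Fin n → Option (Fin m), if ∀ i, (fibers c i).Nonempty then
          (-1 : ℤ) ^ ((∑ i, #(fibers c i)) - m) else 0 := by
        rw [sum_ite_pairwise_disjoint_eq_sum_fibers]
    _ = ∑ c : Fin n → Option (Fin m), (-1) ^ m * if ∀ i, ∃ x, c x = some i then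
          ∏ x, (c x).elim 1 (fun _ => -1) else 0 := by
        refine sum_congr rfl fun c _ => ?_
        simp only [fibers_nonempty_iff]
        split_ifs with h
        · have hm : m ≤ ∑ i, #(fibers c i) := calc
            m = ∑ _i : Fin m, 1 := by simp
            _ ≤ ∑ i, #(fibers c i) :=
              sum_le_sum fun i _ => card_pos.2 (fibers_nonempty_iff.2 (h i))
          rw [neg_one_pow_sub hm, prod_elim_neg_one_eq_neg_one_pow_sum_card_fibers]
          ring
        · rw [mul_zero]
    _ = _ := by rw [← mul_sum, sum_filter]

lemma homEulerChar_eq_sum_range (m n : ℕ) :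
    homEulerChar m n =
      (-1) ^ m * ∑ j ∈ range (m + 1), (m.choose j : ℤ) * ((-1) ^ (m - j) * (1 - j : ℤ) ^ n) := by
  have hweight (T : Finset (Fin m)) :
      (-1 : ℤ) ^ #Tᶜ * ((none : Option (Fin m)).elim 1 (fun _ => -1) +
        ∑ i ∈ T, (some i).elim 1 (fun _ => -1)) ^ Fintype.card (Fin n) =
      (-1) ^ (m - #T) * (1 - #T : ℤ) ^ n := by
    simp [card_compl, sub_eq_add_neg]
  rw [homEulerChar_eq_sum_prod,
    sum_prod_filter_forall_exists_eq_some (fun o : Option (Fin m) => o.elim 1 fun _ => -1)]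
  simp only [hweight]
  rw [← powerset_univ, sum_powerset_apply_card (fun j => (-1 : ℤ) ^ (m - j) * (1 - j : ℤ) ^ n)]
  simp

lemma homEulerChar_sub_one_eq_sum_range (m n : ℕ) :
    homEulerChar m n - 1 =
      (-1) ^ m * ∑ k ∈ range m, (m.choose (k + 1) : ℤ) * ((-1) ^ (m - (k + 1)) * (-k : ℤ) ^ n) := by
  rw [homEulerChar_eq_sum_range, sum_range_succ']
  simp [mul_add, ← mul_pow]

theorem sphereCount_closed_formula_general (m n : ℕ) (hmn : m ≤ n) :
    sphereCount m n =
      ∑ k ∈ Finset.Icc 1 (m - 1),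
        (-1 : ℤ) ^ (m + k + 1) * (m.choose (k + 1) : ℤ) * (k : ℤ) ^ n := by
  have hsub : Icc 1 (m - 1) ⊆ range m := fun k hk => by
    simp only [mem_Icc, mem_range] at hk ⊢; omega
  have hzero : ∀ k ∈ range m, k ∉ Icc 1 (m - 1) →
      (-1 : ℤ) ^ (m + k + 1) * (m.choose (k + 1) : ℤ) * (k : ℤ) ^ n = 0 := fun k hk hk' => by
    simp only [mem_Icc, mem_range] at hk hk'
    obtain rfl : k = 0 := by omega
    simp [zero_pow (by omega : n ≠ 0)]
  rw [sum_subset hsub hzero, sphereCount, homEulerChar_sub_one_eq_sum_range, mul_sum, mul_sum]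
  refine sum_congr rfl fun k hk => ?_
  have hsign :
      (-1 : ℤ) ^ (n - m) * (-1) ^ m * (-1) ^ (m - (k + 1)) * (-1) ^ n = (-1) ^ (m + k + 1) := by
    simp only [← pow_add]
    rw [neg_one_pow_eq_pow_mod_two, neg_one_pow_eq_pow_mod_two (n := m + k + 1)]
    congr 1
    simp only [mem_range] at hk
    omega
  rw [← hsign, neg_pow]
  ring

/-- for `n ≥ m ≥ 1`,
`f(m,n) = Σ_{k=1}^{m−1} (−1)^{m+k+1} · C(m, k+1) · k^n`. -/
theorem sphereCount_closed_formula (m n : ℕ) (hm : 1 ≤ m) (hmn : m ≤ n) :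
    sphereCount m n =
      ∑ k ∈ Finset.Icc 1 (m - 1),
        (-1 : ℤ) ^ (m + k + 1) * (m.choose (k + 1) : ℤ) * (k : ℤ) ^ n :=
  sphereCount_closed_formula_general m n hmn
end

section
/- For every integer m ≥ 1, the formal power series G_m(x) = Σ_{n≥1} χ(m,n)·x^n over the integers satisfies (1 − x) · (∏_{i=1}^{m−1} (1 + i·x)) · G_m(x) = m! · x^m; that is, G_m(x) = m!·x^m / ((1−x)(1+x)(1+2x)⋯(1+(m−1)x)). -/
open Finset

lemma neg_one_pow_sub_s6 {R : Type*} [Monoid R] [HasDistribNeg R] {m k : ℕ} (h : k ≤ m) :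
    (-1 : R) ^ (m - k) = (-1) ^ m * (-1) ^ k := by
  obtain ⟨d, rfl⟩ := Nat.exists_eq_add_of_le h
  rw [Nat.add_sub_cancel_left, pow_add, ((Commute.neg_one_left _).pow_left k).eq, mul_assoc,
    ← pow_add, ← two_mul, pow_mul, neg_one_sq, one_pow, mul_one]

namespace PartialMap

variable {α β : Type*} [Fintype α] [DecidableEq β]

def sign (f : α → Option β) : ℤ := ∏ x, if f x = none then 1 else -1

def blocks (f : α → Option β) (i : β) : Finset α := {x | f x = some i}

lemma blocks_disjoint (f : α → Option β) {i j : β} (hij : i ≠ j) :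
    Disjoint (blocks f i) (blocks f j) := by
  simp only [blocks, disjoint_left, mem_filter, mem_univ, true_and]
  intro x hi hj
  exact hij (Option.some_injective _ (hi.symm.trans hj))

lemma blocks_nonempty_iff (f : α → Option β) (i : β) :
    (blocks f i).Nonempty ↔ ∃ x, f x = some i := by
  simp [blocks, Finset.Nonempty]

lemma blocks_injective : Function.Injective (blocks : (α → Option β) → β → Finset α) := by
  intro f g h
  funext x
  refine Option.eq_of_eq_some fun i => ?_
  simpa [blocks] using congrArg (x ∈ ·) (congrFun h i)

lemma exists_blocks_eq (η : β → Finset α) (hη : ∀ i j, i ≠ j → Disjoint (η i) (η j)) :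
    ∃ f : α → Option β, blocks f = η := by
  have (x : α) : ∃ o : Option β, ∀ i, o = some i ↔ x ∈ η i := by
    by_cases hx : ∃ i, x ∈ η i
    · obtain ⟨i, hi⟩ := hx
      refine ⟨some i, fun j => ⟨?_, fun hj => ?_⟩⟩
      · rintro ⟨⟩; exact hi
      · by_contra hne
        exact disjoint_left.mp (hη i j (fun h => hne (congrArg some h))) hi hj
    · push Not at hx
      exact ⟨none, fun i => by simp [hx i]⟩
  choose f hf using this
  exact ⟨f, funext fun i => by ext x; simp [blocks, hf]⟩

lemma sign_eq_neg_one_pow_sum_card_blocks [DecidableEq α] [Fintype β] (f : α → Option β) :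
    sign f = (-1) ^ ∑ i, #(blocks f i) := by
  have hdom : univ.biUnion (blocks f) = ({x | f x ≠ none} : Finset α) := by
    ext x
    simp [blocks, Option.ne_none_iff_exists']
  rw [← card_biUnion (fun i _ j _ hij => blocks_disjoint f hij), hdom, sign, prod_ite,
    prod_const_one, one_mul, prod_const]

-- Arbitrary decidability instances: `homEulerChar` decides its condition by
-- `Nat.decidableForallFin`.
lemma sum_ite_disjoint_nonempty_eq_sum_blocks [DecidableEq α] [Fintype β]
    {M : Type*} [AddCommMonoid M]
    [∀ η : β → Finset α,
      Decidable ((∀ i, (η i).Nonempty) ∧ (∀ i j, i ≠ j → Disjoint (η i) (η j)))]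
    [DecidablePred fun f : α → Option β => ∀ i, ∃ x, f x = some i]
    (g : (β → Finset α) → M) :
    ∑ η : β → Finset α,
        (if (∀ i, (η i).Nonempty) ∧ (∀ i j, i ≠ j → Disjoint (η i) (η j))
          then g η else 0)
      = ∑ f : α → Option β with ∀ i, ∃ x, f x = some i, g (blocks f) := by
  rw [← sum_filter]
  symm
  refine sum_nbij blocks (fun f hf => ?_) blocks_injective.injOn (fun η hη => ?_)
    (fun _ _ => rfl)
  · simp only [mem_filter, mem_univ, true_and] at hf ⊢
    exact ⟨fun i => (blocks_nonempty_iff f i).mpr (hf i), fun i j => blocks_disjoint f⟩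
  · simp only [coe_filter, mem_univ, true_and, Set.mem_ofPred_eq] at hη
    obtain ⟨f, rfl⟩ := exists_blocks_eq η hη.2
    exact ⟨f, by simpa [blocks_nonempty_iff] using hη.1, rfl⟩

lemma sum_sign_inf_forall_ne_some [DecidableEq α] [Fintype β] (t : Finset β) :
    ∑ f ∈ t.inf (fun i => ({f | ∀ x, f x ≠ some i} : Finset (α → Option β))), sign f
      = (1 - #tᶜ : ℤ) ^ Fintype.card α := by
  have hmaps : t.inf (fun i => ({f | ∀ x, f x ≠ some i} : Finset (α → Option β)))
      = Fintype.piFinset fun _ => insertNone tᶜ := by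
    ext f
    simp only [mem_inf, mem_filter, mem_univ, true_and, Fintype.mem_piFinset, mem_insertNone,
      Option.mem_def, mem_compl]
    exact ⟨fun h x i hx hi => h i hi x hx, fun h i hi x hx => h x i hx hi⟩
  have hsign : ∑ o ∈ insertNone tᶜ, (if o = none then 1 else -1 : ℤ) = 1 - #tᶜ := by
    simp [sum_insertNone, sub_eq_add_neg]
  rw [hmaps]
  unfold sign
  rw [← prod_univ_sum (fun _ => insertNone tᶜ) (fun _ o => if o = none then 1 else -1)]
  simp only [hsign, prod_const, card_univ]

lemma sum_sign_filter_forall_exists_eq_some [DecidableEq α] [Fintype β]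
    [DecidablePred fun f : α → Option β => ∀ i, ∃ x, f x = some i] :
    ∑ f : α → Option β with ∀ i, ∃ x, f x = some i, sign f
      = (-1) ^ Fintype.card β * ∑ k ∈ range (Fintype.card β + 1),
          (-1) ^ k * (Fintype.card β).choose k * (1 - k : ℤ) ^ Fintype.card α := by
  have hsurj : ({f | ∀ i, ∃ x, f x = some i} : Finset (α → Option β))
      = univ.inf fun i => ({f | ∀ x, f x ≠ some i} : Finset _)ᶜ := by
    ext f
    simp [mem_inf]
  rw [hsurj, inclusion_exclusion_sum_inf_compl]
  simp only [sum_sign_inf_forall_ne_some, powerset_univ, smul_eq_mul]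
  rw [← Equiv.sum_comp (compl_involutive (α := Finset β)).toPerm]
  simp only [Function.Involutive.coe_toPerm, compl_compl, card_compl]
  rw [← powerset_univ, sum_powerset_apply_card
    (fun k => (-1) ^ (Fintype.card β - k) * (1 - k : ℤ) ^ Fintype.card α), mul_sum, card_univ]
  refine sum_congr rfl fun k hk => ?_
  rw [neg_one_pow_sub_s6 (Nat.lt_succ_iff.mp (mem_range.mp hk)), nsmul_eq_mul]
  ring

end PartialMap

open PartialMap in
theorem homEulerChar_eq_sum_choose (m n : ℕ) :
    homEulerChar m n = ∑ k ∈ range (m + 1), (-1) ^ k * m.choose k * (1 - k : ℤ) ^ n := by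
  have hsign (f : Fin n → Option (Fin m)) (hf : ∀ i, ∃ x, f x = some i) :
      (-1 : ℤ) ^ (∑ i, #(blocks f i) - m) = (-1) ^ m * sign f := by
    have hm : m ≤ ∑ i, #(blocks f i) := by
      simpa using card_nsmul_le_sum univ (fun i => #(blocks f i)) 1
        fun i _ => card_pos.mpr ((blocks_nonempty_iff f i).mpr (hf i))
    rw [neg_one_pow_sub_s6 hm, sign_eq_neg_one_pow_sum_card_blocks, mul_comm]
  rw [homEulerChar,
    sum_ite_disjoint_nonempty_eq_sum_blocks (fun η => (-1 : ℤ) ^ (∑ i, #(η i) - m))]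
  refine (sum_congr rfl fun f hf => hsign f (mem_filter.mp hf).2).trans ?_
  rw [← mul_sum, sum_sign_filter_forall_exists_eq_some, Fintype.card_fin, Fintype.card_fin,
    ← mul_assoc, ← pow_add, ← two_mul, pow_mul, neg_one_sq, one_pow, one_mul]

lemma homEulerChar_zero_left (n : ℕ) : homEulerChar 0 n = 1 := by
  simp [homEulerChar_eq_sum_choose]

lemma homEulerChar_zero_right {m : ℕ} (hm : m ≠ 0) : homEulerChar m 0 = 0 := by
  simpa [homEulerChar_eq_sum_choose] using Int.alternating_sum_range_choose_of_ne hm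

lemma homEulerChar_succ_succ (m n : ℕ) :
    homEulerChar (m + 1) (n + 1) + m * homEulerChar (m + 1) n = (m + 1) * homEulerChar m n := by
  have hterm (k : ℕ) (hk : k ≤ m + 1) :
      (-1) ^ k * ((m + 1).choose k : ℤ) * (1 - k) ^ (n + 1)
          + m * ((-1) ^ k * ((m + 1).choose k : ℤ) * (1 - k) ^ n)
        = (m + 1) * ((-1) ^ k * (m.choose k : ℤ) * (1 - k) ^ n) := by
    have hchoose : ((m + 1).choose k : ℤ) * (m + 1 - k) = m.choose k * (m + 1) := by
      have h := Nat.choose_mul_succ_eq m k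
      zify [hk] at h
      linarith
    linear_combination (-1) ^ k * (1 - k : ℤ) ^ n * hchoose
  rw [homEulerChar_eq_sum_choose, homEulerChar_eq_sum_choose, homEulerChar_eq_sum_choose,
    mul_sum, mul_sum, ← sum_add_distrib, sum_range_succ _ (m + 1), hterm _ le_rfl,
    Nat.choose_succ_self, Nat.cast_zero, mul_zero, zero_mul, mul_zero, add_zero]
  exact sum_congr rfl fun k hk => hterm k (mem_range.mp hk).le

section GeneratingFunction

open PowerSeries

lemma one_sub_X_mul_mk_homEulerChar_zero : (1 - X) * PowerSeries.mk (homEulerChar 0) = 1 := by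
  have hconst : PowerSeries.mk (homEulerChar 0) = PowerSeries.mk 1 :=
    congrArg PowerSeries.mk (funext homEulerChar_zero_left)
  rw [hconst, mul_comm, mk_one_mul_one_sub_eq_one]

lemma one_add_mul_X_mul_mk_homEulerChar_succ (m : ℕ) :
    (1 + C (m : ℤ) * X) * PowerSeries.mk (homEulerChar (m + 1))
      = C (m + 1 : ℤ) * X * PowerSeries.mk (homEulerChar m) := by
  ext (_ | n)
  · simp [homEulerChar_zero_right]
  · rw [add_mul, one_mul, mul_assoc, mul_assoc, map_add, coeff_C_mul, coeff_C_mul,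
      coeff_succ_X_mul, coeff_succ_X_mul, coeff_mk, coeff_mk, coeff_mk]
    linear_combination homEulerChar_succ_succ m n

lemma one_sub_X_mul_prod_mul_mk_homEulerChar (m : ℕ) :
    (1 - X) * (∏ i ∈ range m, (1 + C (i : ℤ) * X)) * PowerSeries.mk (homEulerChar m)
      = C (m.factorial : ℤ) * X ^ m := by
  induction m with
  | zero => simp [one_sub_X_mul_mk_homEulerChar_zero]
  | succ m ih =>
    calc _ = (1 - X) * (∏ i ∈ range m, (1 + C (i : ℤ) * X))
          * ((1 + C (m : ℤ) * X) * PowerSeries.mk (homEulerChar (m + 1))) := by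
          rw [prod_range_succ]
          ring
      _ = C (m + 1 : ℤ) * X * (C (m.factorial : ℤ) * X ^ m) := by
          rw [one_add_mul_X_mul_mk_homEulerChar_succ, ← ih]
          ring
      _ = _ := by
          rw [Nat.factorial_succ, Nat.cast_mul, map_mul, pow_succ]
          push_cast
          ring

end GeneratingFunction

open PowerSeries in
/-- for `m ≥ 1`, the generating function `G_m(x) = Σ_{n≥1} χ(m,n)·xⁿ`
satisfies `(1 − x)·(1+x)(1+2x)⋯(1+(m−1)x) · G_m(x) = m!·x^m`. -/
theorem homEulerChar_generating_function (m : ℕ) (hm : 1 ≤ m) :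
    (1 - X) * (∏ i ∈ Finset.Icc 1 (m - 1), (1 + C (i : ℤ) * X)) *
        PowerSeries.mk (fun n => if n = 0 then 0 else homEulerChar m n)
      = C (m.factorial : ℤ) * X ^ m := by
  obtain ⟨k, rfl⟩ := Nat.exists_eq_add_of_le' hm
  have hseries : PowerSeries.mk (fun n => if n = 0 then 0 else homEulerChar (k + 1) n)
      = PowerSeries.mk (homEulerChar (k + 1)) := by
    congr
    funext n
    split_ifs with hn
    · rw [hn, homEulerChar_zero_right k.succ_ne_zero]
    · rfl
  have hprod : ∏ i ∈ Icc 1 (k + 1 - 1), (1 + C (i : ℤ) * X)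
      = ∏ i ∈ range (k + 1), (1 + C (i : ℤ) * X) := by
    rw [prod_range_succ', Nat.add_sub_cancel, ← Ico_add_one_right_eq_Icc, prod_Ico_eq_prod_range]
    simp [add_comm]
  rw [hseries, hprod, one_sub_X_mul_prod_mul_mk_homEulerChar]
end
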